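/- arXiv:1602.08564 — 5 statements merged into one kernel-verified Lean document; each statement's English description precedes it below -/
import Mathlib

section
/- Let G be an infinite countable amenable group and T a finite tiling of G with shape set S (each shape containing the identity). If T is irreducible, i.e., there exist a finite set T₀ ⊆ G and ε > 0 such that every (T₀, ε)-invariant finite subset F of G contains a translate of every shape of T that lies in T, then for every shape S₀ ∈ S, the center C(S₀) = {c ∈ G : S₀c ∈ T} is a syndetic subset of G. -/
open Filter Topology Pointwise ENNReal

/-- A Følner sequence for a group `G`. -/
def IsFolnerSeq (G : Type*) [Group G] (F : ℕ → Finset G) : Prop :=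
  (∀ n, (F n).Nonempty) ∧
    ∀ g : G, Filter.Tendsto
      (fun n => ((symmDiff (g • ((F n) : Set G)) ((F n) : Set G)).ncard : ℝ) / (F n).card)
      Filter.atTop (nhds 0)

/-- A group is amenable if it admits a Følner sequence. -/
def IsAmenable (G : Type*) [Group G] : Prop := ∃ F : ℕ → Finset G, IsFolnerSeq G F

variable {G : Type*} [Group G]

/-- The `K`-boundary of a finite set `A`. -/
def kBoundary (A K : Finset G) : Set G :=
  {g : G | (∃ k ∈ K, k * g ∈ A) ∧ ∃ k ∈ K, k * g ∉ A}

/-- `A` is `(K, δ)`-invariant. -/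
def InvariantSet (A K : Finset G) (δ : ℝ) : Prop :=
  ((kBoundary A K).ncard : ℝ) < δ * A.card

/-- A subset of a group is syndetic if finitely many translates cover the group. -/
def Syndetic (A : Set G) : Prop := ∃ F : Finset G, (F : Set G) * A = Set.univ

/-- A finite tiling of a group `G`: a partition of `G` into right translates of
finitely many finite shapes, each shape containing the identity. -/
structure FiniteTiling (G : Type*) [Group G] where
  tiles : Set (Set G)
  shapes : Finset (Finset G)
  covers : ∀ g : G, ∃! t, t ∈ tiles ∧ g ∈ t
  tile_shape : ∀ t ∈ tiles, ∃ S ∈ shapes, ∃ c : G, t = (S : Set G) * {c}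
  one_mem_shape : ∀ S ∈ shapes, (1 : G) ∈ S

/-- The set of centers of a shape `S` in a tiling. -/
def FiniteTiling.center (T : FiniteTiling G) (S : Finset G) : Set G :=
  {c : G | ((S : Set G) * {c}) ∈ T.tiles}

/-- A finite tiling is irreducible if every sufficiently invariant finite set
contains a tile of every shape. -/
def FiniteTiling.IsIrreducible (T : FiniteTiling G) : Prop :=
  ∃ (T₀ : Finset G) (ε : ℝ), 0 < ε ∧
    ∀ F : Finset G, InvariantSet F T₀ ε →
      ∀ S ∈ T.shapes, ∃ c ∈ T.center S, (S : Set G) * {c} ⊆ (F : Set G)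

/-- The shift action of `G` on `A^G`: `(c • x) g = x (g * c)`. -/
def shiftAct {A : Type*} (c : G) (x : G → A) : G → A := fun g => x (g * c)

instance : TopologicalSpace (Option (Finset G)) := ⊥

open Classical in
/-- The point of `(S(T) ∪ {0})^G` encoding the centers of a tiling. -/
noncomputable def FiniteTiling.point (T : FiniteTiling G) : G → Option (Finset G) :=
  fun g => if h : ∃ S, S ∈ T.shapes ∧ g ∈ T.center S then some h.choose else none

/-- The subshift associated with a finite tiling: the orbit closure of `T.point`. -/
noncomputable def FiniteTiling.subshift (T : FiniteTiling G) : Set (G → Option (Finset G)) :=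
  closure (Set.range fun c : G => shiftAct c T.point)

/-- `T₂` is primely congruent with `T₁`: tiles of `T₂` are unions of tiles of `T₁`
and each shape of `T₂` has a unique master partition by tiles of `T₁`. -/
def PrimelyCongruent (T₁ T₂ : FiniteTiling G) : Prop :=
  (∀ t₁ ∈ T₁.tiles, ∀ t₂ ∈ T₂.tiles, (t₁ ∩ t₂).Nonempty → t₁ ⊆ t₂) ∧
  ∀ S ∈ T₂.shapes, ∀ c c' : G, c ∈ T₂.center S → c' ∈ T₂.center S →
    {u : Set G | ∃ t ∈ T₁.tiles, t ⊆ (S : Set G) * {c} ∧ u = t * {c⁻¹}} =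
    {u : Set G | ∃ t ∈ T₁.tiles, t ⊆ (S : Set G) * {c'} ∧ u = t * {c'⁻¹}}

/-- Number of patterns of a subshift on a finite window `F`. -/
noncomputable def patternCount {A : Type*} (X : Set (G → A)) (F : Finset G) : ℕ :=
  {p : ↑F → A | ∃ x ∈ X, ∀ g : ↑F, x (g : G) = p g}.ncard

section Dim

variable {Y : Type*} [TopologicalSpace Y]

/-- `β` is a finite open cover of the set `X`. -/
def IsOpenCoverOf (X : Set Y) (β : Finset (Set Y)) : Prop :=
  (∀ U ∈ β, IsOpen U) ∧ X ⊆ ⋃ U ∈ β, U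

/-- The order of a finite cover on a set `X`. -/
noncomputable def ordOn (X : Set Y) (β : Finset (Set Y)) : ℕ :=
  ⨆ y : X, ({U : Set Y | U ∈ β ∧ (y : Y) ∈ U}.ncard - 1)

/-- `D(α)`: minimal order among finite open covers of `X` refining `α`. -/
noncomputable def Dcov (X : Set Y) (α : Finset (Set Y)) : ℕ :=
  sInf {n | ∃ β : Finset (Set Y), IsOpenCoverOf X β ∧
    (∀ U ∈ β, ∃ V ∈ α, U ⊆ V) ∧ ordOn X β = n}

/-- The topological (covering) dimension of a subset `X` of a topological space. -/
noncomputable def topDim (X : Set Y) : ℕ∞ :=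
  ⨆ α ∈ {α : Finset (Set Y) | IsOpenCoverOf X α}, (Dcov X α : ℕ∞)

/-- The join `⋁_{g ∈ F} (σ g)⁻¹ α` of the pullbacks of a finite cover along an action. -/
noncomputable def FCover {H : Type*} (σ : H → Y → Y) (F : Finset H) (α : Finset (Set Y)) :
    Finset (Set Y) :=
  letI := Classical.decEq H
  letI := Classical.decEq (Set Y)
  (F.pi fun _ => α).image fun f => ⋂ g, ⋂ (h : g ∈ F), σ g ⁻¹' f g h

/-- Mean topological dimension of `X` with respect to an action `σ` of `G`,
computed along the Følner sequence `Fo`. -/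
noncomputable def mdim {H : Type*} (σ : H → Y → Y) (X : Set Y) (Fo : ℕ → Finset H) : ℝ≥0∞ :=
  ⨆ α ∈ {α : Finset (Set Y) | IsOpenCoverOf X α},
    Filter.limsup
      (fun n => (Dcov X (FCover σ (Fo n) α) : ℝ≥0∞) / ((Fo n).card : ℝ≥0∞))
      Filter.atTop

end Dim

/-- A polyhedron: a finite union of simplices (convex hulls of finite sets) in a
Euclidean space. -/
def IsPolyhedron {N : ℕ} (P : Set (EuclideanSpace ℝ (Fin N))) : Prop :=
  ∃ S : Finset (Finset (EuclideanSpace ℝ (Fin N))),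
    P = ⋃ s ∈ S, convexHull ℝ (s : Set (EuclideanSpace ℝ (Fin N)))

/-- The upper (Banach) density of a subset of an amenable group. -/
noncomputable def upperDensity (G : Type*) [Group G] (J : Set G) : ℝ :=
  sSup {r : ℝ | ∃ Fo : ℕ → Finset G, IsFolnerSeq G Fo ∧
    r = Filter.limsup (fun n => ((J ∩ (Fo n : Set G)).ncard : ℝ) / (Fo n).card) Filter.atTop}


open Classical in
lemma kBoundary_subset_biUnion (A K : Finset G) :
    kBoundary A K ⊆ ↑(K.biUnion fun k => symmDiff (k⁻¹ • A) A) := by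
  intro g hg
  obtain ⟨⟨k1, hk1, h1⟩, ⟨k2, hk2, h2⟩⟩ := hg
  simp only [Finset.coe_biUnion, Set.mem_iUnion, Finset.mem_coe, Finset.mem_biUnion]
  by_cases hgA : g ∈ A
  · refine ⟨k2, hk2, ?_⟩
    rw [Finset.mem_symmDiff]
    right
    refine ⟨hgA, ?_⟩
    intro hmem
    rw [Finset.mem_smul_finset] at hmem
    obtain ⟨y, hy, hy2⟩ := hmem
    apply h2
    have : y = k2 * g := by rw [← hy2, smul_eq_mul]; group
    rwa [this] at hy
  · refine ⟨k1, hk1, ?_⟩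
    rw [Finset.mem_symmDiff]
    left
    refine ⟨?_, hgA⟩
    rw [Finset.mem_smul_finset]
    exact ⟨k1 * g, h1, by rw [smul_eq_mul]; group⟩

open Classical in
lemma exists_invariant (hG : IsAmenable G) (K : Finset G) {ε : ℝ} (hε : 0 < ε) :
    ∃ A : Finset G, A.Nonempty ∧ InvariantSet A K ε := by
  obtain ⟨Fo, hne, hconv⟩ := hG
  have hsum : Filter.Tendsto
      (fun n => ∑ k ∈ K,
        ((symmDiff ((k⁻¹ : G) • ((Fo n : Set G))) (Fo n : Set G)).ncard : ℝ) / (Fo n).card)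
      Filter.atTop (nhds 0) := by
    have h := tendsto_finset_sum K (fun k (_ : k ∈ K) => hconv k⁻¹)
    simpa using h
  have hev : ∀ᶠ n in Filter.atTop,
      (∑ k ∈ K,
        ((symmDiff ((k⁻¹ : G) • ((Fo n : Set G))) (Fo n : Set G)).ncard : ℝ) / (Fo n).card) < ε :=
    hsum.eventually_lt_const hε
  obtain ⟨n, hn⟩ := hev.exists
  refine ⟨Fo n, hne n, ?_⟩
  have hcardpos : (0 : ℝ) < (Fo n).card := by
    exact_mod_cast Finset.card_pos.mpr (hne n)
  have hterm : ∀ k : G,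
      ((symmDiff ((k⁻¹ : G) • ((Fo n : Set G))) (Fo n : Set G)).ncard : ℝ) =
      ((symmDiff (k⁻¹ • (Fo n)) (Fo n)).card : ℝ) := by
    intro k
    congr 1
    have : symmDiff ((k⁻¹ : G) • ((Fo n : Set G))) (Fo n : Set G) =
        ((symmDiff (k⁻¹ • (Fo n)) (Fo n) : Finset G) : Set G) := by
      rw [Finset.coe_symmDiff, Finset.coe_smul_finset]
    rw [this, Set.ncard_coe_finset]
  have hbound : ((kBoundary (Fo n) K).ncard : ℝ) ≤
      ∑ k ∈ K, ((symmDiff (k⁻¹ • (Fo n)) (Fo n)).card : ℝ) := by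
    have hsub := kBoundary_subset_biUnion (Fo n) K
    have h1 : (kBoundary (Fo n) K).ncard ≤
        (K.biUnion fun k => symmDiff (k⁻¹ • (Fo n)) (Fo n)).card := by
      have := Set.ncard_le_ncard hsub (Finset.finite_toSet _)
      rwa [Set.ncard_coe_finset] at this
    have h2 := Finset.card_biUnion_le (s := K)
      (t := fun k => symmDiff (k⁻¹ • (Fo n)) (Fo n))
    exact_mod_cast le_trans h1 h2
  unfold InvariantSet
  rw [← div_lt_iff₀ hcardpos]
  calc ((kBoundary (Fo n) K).ncard : ℝ) / (Fo n).card
      ≤ (∑ k ∈ K, ((symmDiff (k⁻¹ • (Fo n)) (Fo n)).card : ℝ)) / (Fo n).card := by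
        gcongr
    _ = ∑ k ∈ K, ((symmDiff (k⁻¹ • (Fo n)) (Fo n)).card : ℝ) / (Fo n).card := by
        rw [Finset.sum_div]
    _ = ∑ k ∈ K,
        ((symmDiff ((k⁻¹ : G) • ((Fo n : Set G))) (Fo n : Set G)).ncard : ℝ) / (Fo n).card := by
        refine Finset.sum_congr rfl fun k _ => ?_
        rw [hterm k]
    _ < ε := hn

open Classical in
lemma InvariantSet.translate {A K : Finset G} {δ : ℝ} (h : InvariantSet A K δ) (g : G) :
    InvariantSet (A.image (· * g)) K δ := by
  unfold InvariantSet at h ⊢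
  have hmem : ∀ x : G, x ∈ A.image (· * g) ↔ x * g⁻¹ ∈ A := by
    intro x
    simp only [Finset.mem_image]
    constructor
    · rintro ⟨a, ha, rfl⟩; simpa using ha
    · intro hx; exact ⟨x * g⁻¹, hx, by group⟩
  have hkb : kBoundary (A.image (· * g)) K = (· * g) '' kBoundary A K := by
    ext x
    constructor
    · rintro ⟨⟨k1, hk1, h1⟩, ⟨k2, hk2, h2⟩⟩
      refine ⟨x * g⁻¹, ⟨⟨k1, hk1, ?_⟩, ⟨k2, hk2, ?_⟩⟩, by group⟩
      · rw [hmem] at h1; rw [← mul_assoc]; exact h1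
      · rw [hmem] at h2; intro hc; apply h2; rw [← mul_assoc] at hc; exact hc
    · rintro ⟨y, ⟨⟨k1, hk1, h1⟩, ⟨k2, hk2, h2⟩⟩, rfl⟩
      refine ⟨⟨k1, hk1, ?_⟩, ⟨k2, hk2, ?_⟩⟩
      · rw [hmem]; group; simpa using h1
      · rw [hmem]; intro hc; apply h2; revert hc; group; exact id
  rw [hkb, Set.ncard_image_of_injective _ (mul_left_injective g),
    Finset.card_image_of_injective _ (mul_left_injective g)]
  exact h

/-- If a finite tiling of a countable infinite amenable group is
irreducible, then the center of every shape is syndetic. -/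
theorem irreducible_implies_syndetic_centers
    {G : Type*} [Group G] [Countable G] [Infinite G] (hG : IsAmenable G)
    (T : FiniteTiling G) (hirr : T.IsIrreducible) :
    ∀ S ∈ T.shapes, Syndetic (T.center S) := by
  classical
  intro S hS
  obtain ⟨T₀, ε, hε, hmain⟩ := hirr
  obtain ⟨A, hAne, hAinv⟩ := exists_invariant hG T₀ hε
  refine ⟨A.image (·⁻¹), ?_⟩
  ext g
  simp only [Set.mem_univ, iff_true]
  obtain ⟨c, hc, hsub⟩ := hmain (A.image (· * g)) (hAinv.translate g) S hS
  have h1 : c ∈ ((S : Set G) * {c}) :=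
    ⟨1, T.one_mem_shape S hS, c, rfl, one_mul c⟩
  have h2 := hsub h1
  obtain ⟨a, ha, hag⟩ : ∃ a ∈ A, a * g = c := by
    have : c * g⁻¹ ∈ A := by simpa using h2
    exact ⟨c * g⁻¹, this, by group⟩
  refine ⟨a⁻¹, ?_, c, hc, ?_⟩
  · simp only [Finset.coe_image, Set.mem_image, Finset.mem_coe]
    exact ⟨a, ha, rfl⟩
  · rw [← hag]; group
end

section
/- Let G be an infinite countable amenable group and T a finite tiling of G with shapes containing the identity. If for every shape S₀ of T the center C(S₀) = {c : S₀c ∈ T} is syndetic in G, then T is irreducible: there exist a finite set T₀ ⊆ G and ε > 0 such that every (T₀, ε)-invariant finite subset F of G contains, for every shape S₀, some tile S₀c ∈ T with S₀c ⊆ F. -/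
open Filter Topology Pointwise ENNReal

variable {G : Type*} [Group G]

/-- If every shape of a finite tiling of a countable infinite
amenable group has syndetic center, then the tiling is irreducible. -/
theorem syndetic_centers_implies_irreducible
    {G : Type*} [Group G] [Countable G] [Infinite G] (hG : IsAmenable G)
    (T : FiniteTiling G) (hsyn : ∀ S ∈ T.shapes, Syndetic (T.center S)) :
    ∃ (T₀ : Finset G) (ε : ℝ), 0 < ε ∧
      ∀ F : Finset G, InvariantSet F T₀ ε →
        ∀ S ∈ T.shapes, ∃ c ∈ T.center S, (S : Set G) * {c} ⊆ (F : Set G) := by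
  classical
  choose! K hK using hsyn
  refine ⟨insert 1 (T.shapes.sup fun S => S * (K S)⁻¹), 1, one_pos, ?_⟩
  intro F hF S hS
  set T₀ : Finset G := insert 1 (T.shapes.sup fun S => S * (K S)⁻¹) with hT₀
  have hF' : ((kBoundary F T₀).ncard : ℝ) < F.card := by
    unfold InvariantSet at hF; linarith
  -- boundary is finite
  have hbfin : (kBoundary F T₀).Finite := by
    apply Set.Finite.subset (Set.Finite.biUnion T₀.finite_toSet
      (fun k _ => (F.finite_toSet.image (fun a => k⁻¹ * a))))
    rintro g ⟨⟨k, hk, hkg⟩, -⟩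
    exact Set.mem_biUnion hk ⟨k * g, hkg, by group⟩
  -- find g ∈ F not in boundary
  have hex : ∃ g ∈ F, g ∉ kBoundary F T₀ := by
    by_contra h
    push_neg at h
    have hsub : (F : Set G) ⊆ kBoundary F T₀ := fun g hg => h g hg
    have hle : (F.card : ℝ) ≤ ((kBoundary F T₀).ncard : ℝ) := by
      have := Set.ncard_le_ncard hsub hbfin
      rw [Set.ncard_coe_finset] at this
      exact_mod_cast this
    linarith
  obtain ⟨g, hgF, hgB⟩ := hex
  have hTg : ∀ k ∈ T₀, k * g ∈ F := by
    intro k hk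
    by_contra hkF
    exact hgB ⟨⟨1, Finset.mem_insert_self 1 _, by simpa using hgF⟩, ⟨k, hk, hkF⟩⟩
  -- decompose g = k * c
  have huniv := hK S hS
  have hg : g ∈ ((K S : Set G) * T.center S) := by rw [huniv]; trivial
  obtain ⟨k, hk, c, hc, rfl⟩ := hg
  refine ⟨c, hc, ?_⟩
  rintro x ⟨s, hs, c', hc', rfl⟩
  simp only [Set.mem_singleton_iff] at hc'
  subst hc'
  have hmem : s * k⁻¹ ∈ T₀ := by
    refine Finset.mem_insert_of_mem ?_
    have hle : S * (K S)⁻¹ ⊆ T.shapes.sup fun S => S * (K S)⁻¹ :=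
      Finset.le_sup (f := fun S => S * (K S)⁻¹) hS
    exact hle (Finset.mul_mem_mul hs (Finset.inv_mem_inv hk))
  have := hTg (s * k⁻¹) hmem
  simpa [mul_assoc] using this
end

section
/- Let G be an infinite countable amenable group, T a finite tiling of G with shapes containing e_G, X_T the associated subshift over the alphabet S(T) ∪ {0} generated by the point x with x_g = S₀ if g ∈ C(S₀) and x_g = 0 otherwise. Then T is irreducible if and only if for every y ∈ X_T and every shape S₀ of T there exists g ∈ G with y_g = S₀. -/
open Filter Topology Pointwise ENNReal

variable {G : Type*} [Group G]

/-!
Forward direction: a point of `X_T` agrees on a Følner set `F` with a shift of the tiling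
point; `F` is as invariant as irreducibility requires, so the shifted copy of `F` contains a
tile of every shape, whose center is read off in `y`.

Backward direction: the sets `{y | every shape occurs in y on W}`, `W` finite, are open and
increasing, and by hypothesis they cover the compact space `X_T`, so one window `W` works for
every point. Then the centers of each shape meet `W * c` for every `c`, and any finite set
containing a translate of `(⋃ S(T)) * W`, which every sufficiently invariant set does, contains
a tile of every shape.
-/

instance : DiscreteTopology (Option (Finset G)) := ⟨rfl⟩

section Invariance

lemma kBoundary_finite (A K : Finset G) : (kBoundary A K).Finite := by
  refine (Set.Finite.biUnion K.finite_toSet fun k _ => A.finite_toSet.image (k⁻¹ * ·)).subset ?_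
  rintro g ⟨⟨k, hk, hkg⟩, -⟩
  exact Set.mem_biUnion hk ⟨k * g, hkg, by group⟩

lemma InvariantSet.exists_mul_mem {A K : Finset G} (h1 : (1 : G) ∈ K) (h : InvariantSet A K 1) :
    ∃ c : G, ∀ k ∈ K, k * c ∈ A := by
  by_contra! hc
  have hsub : (A : Set G) ⊆ kBoundary A K := fun g hg =>
    ⟨⟨1, h1, by rwa [one_mul]⟩, hc g⟩
  have hle : A.card ≤ (kBoundary A K).ncard := by
    simpa using Set.ncard_le_ncard hsub (kBoundary_finite A K)
  have hlt : ((kBoundary A K).ncard : ℝ) < A.card := by simpa [InvariantSet] using h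
  exact absurd hle (by exact_mod_cast hlt.not_ge)

variable [DecidableEq G]

lemma kBoundary_image_mul_right (A K : Finset G) (c : G) :
    kBoundary (A.image (· * c)) K = (· * c) '' kBoundary A K := by
  have key : ∀ k g : G, k * g ∈ A.image (· * c) ↔ k * (g * c⁻¹) ∈ A := fun k g => by
    simp [← mul_assoc]
  ext g
  rw [Set.image_mul_right]
  simp only [kBoundary, Set.mem_ofPred_eq, Set.mem_preimage, key]

lemma InvariantSet.image_mul_right {A K : Finset G} {δ : ℝ} (h : InvariantSet A K δ) (c : G) :
    InvariantSet (A.image (· * c)) K δ := by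
  rwa [InvariantSet, kBoundary_image_mul_right, Set.ncard_image_of_injective _
    (mul_left_injective c), Finset.card_image_of_injective _ (mul_left_injective c)]

lemma kBoundary_subset_biUnion_symmDiff (A K : Finset G) :
    kBoundary A K ⊆
      ↑((K ×ˢ K).biUnion fun p => p.1⁻¹ • symmDiff ((p.1 * p.2⁻¹) • A) A) := by
  rintro g ⟨⟨k', hk', hk'g⟩, k, hk, hkg⟩
  have hmem : k * g ∈ symmDiff ((k * k'⁻¹) • A) A :=
    Finset.mem_symmDiff.mpr
      (Or.inl ⟨Finset.mem_smul_finset.mpr ⟨k' * g, hk'g, by simp [mul_assoc]⟩, hkg⟩)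
  refine Finset.mem_biUnion.mpr ⟨(k, k'), Finset.mem_product.mpr ⟨hk, hk'⟩, ?_⟩
  exact Finset.mem_smul_finset.mpr ⟨k * g, hmem, by simp⟩

lemma card_symmDiff_smul_finset (a : G) (A : Finset G) :
    (symmDiff (a • A) A).card = (symmDiff (a • (A : Set G)) A).ncard := by
  rw [← Set.ncard_coe_finset, Finset.coe_symmDiff, Finset.coe_smul_finset]

lemma ncard_kBoundary_le_sum (A K : Finset G) :
    ((kBoundary A K).ncard : ℝ) ≤
      ∑ p ∈ K ×ˢ K, ((symmDiff ((p.1 * p.2⁻¹) • (A : Set G)) A).ncard : ℝ) := by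
  have hle := (Set.ncard_le_ncard (kBoundary_subset_biUnion_symmDiff A K)).trans_eq
    (Set.ncard_coe_finset _) |>.trans Finset.card_biUnion_le
  simp only [Finset.card_smul_finset, card_symmDiff_smul_finset] at hle
  exact_mod_cast hle

lemma IsFolnerSeq.exists_invariantSet {Fo : ℕ → Finset G} (hFo : IsFolnerSeq G Fo)
    (K : Finset G) {δ : ℝ} (hδ : 0 < δ) : ∃ n, InvariantSet (Fo n) K δ := by
  have hsum : Tendsto (fun n => ∑ p ∈ K ×ˢ K,
      ((symmDiff ((p.1 * p.2⁻¹) • (Fo n : Set G)) (Fo n)).ncard : ℝ) / (Fo n).card)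
      atTop (𝓝 0) := by
    simpa using tendsto_finsetSum (K ×ˢ K) fun p _ => hFo.2 (p.1 * p.2⁻¹)
  obtain ⟨n, hn⟩ := (hsum.eventually_lt_const hδ).exists
  have hpos : (0 : ℝ) < (Fo n).card := by exact_mod_cast (hFo.1 n).card_pos
  rw [← Finset.sum_div, div_lt_iff₀ hpos] at hn
  exact ⟨n, (ncard_kBoundary_le_sum (Fo n) K).trans_lt hn⟩

end Invariance

namespace FiniteTiling

variable (T : FiniteTiling G)

lemma mem_tile {S : Finset G} (hS : S ∈ T.shapes) (c : G) : c ∈ (S : Set G) * {c} :=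
  ⟨1, T.one_mem_shape S hS, c, rfl, one_mul c⟩

lemma eq_of_mem_center {S₁ S₂ : Finset G} {c : G}
    (h₁ : S₁ ∈ T.shapes) (h₂ : S₂ ∈ T.shapes) (hc₁ : c ∈ T.center S₁)
    (hc₂ : c ∈ T.center S₂) : S₁ = S₂ := by
  obtain ⟨t, -, huniq⟩ := T.covers c
  have heq : (S₁ : Set G) * {c} = (S₂ : Set G) * {c} :=
    (huniq _ ⟨hc₁, T.mem_tile h₁ c⟩).trans (huniq _ ⟨hc₂, T.mem_tile h₂ c⟩).symm
  simp only [Set.mul_singleton] at heq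
  exact Finset.coe_injective ((Set.image_injective.mpr (mul_left_injective c)) heq)

lemma point_eq_some_iff {S : Finset G} (hS : S ∈ T.shapes) (g : G) :
    T.point g = some S ↔ g ∈ T.center S := by
  unfold FiniteTiling.point
  split_ifs with h
  · rw [Option.some_inj]
    exact ⟨fun he => he ▸ h.choose_spec.2,
      fun hg => T.eq_of_mem_center h.choose_spec.1 hS h.choose_spec.2 hg⟩
  · exact ⟨nofun, fun hg => absurd ⟨S, hS, hg⟩ h⟩

lemma point_mem_insert_none_image_some [DecidableEq G] (g : G) :
    T.point g ∈ insert none (T.shapes.image some) := by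
  unfold FiniteTiling.point
  split_ifs with h
  · exact Finset.mem_insert_of_mem (Finset.mem_image_of_mem some h.choose_spec.1)
  · exact Finset.mem_insert_self _ _

lemma shiftAct_point_mem_subshift (c : G) : shiftAct c T.point ∈ T.subshift :=
  subset_closure ⟨c, rfl⟩

lemma isCompact_subshift : IsCompact T.subshift := by
  classical
  let P := Set.univ.pi fun _ : G =>
    (↑(insert none (T.shapes.image some)) : Set (Option (Finset G)))
  have hP : IsCompact P := isCompact_univ_pi fun _ => (Finset.finite_toSet _).isCompact
  refine hP.of_isClosed_subset isClosed_closure (closure_minimal ?_ hP.isClosed)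
  rintro _ ⟨c, rfl⟩ g -
  exact T.point_mem_insert_none_image_some (g * c)

lemma exists_shift_eqOn_of_mem_subshift {y : G → Option (Finset G)} (hy : y ∈ T.subshift)
    (F : Finset G) : ∃ c : G, ∀ g ∈ F, T.point (g * c) = y g := by
  have hopen : IsOpen ((F : Set G).pi fun g => {y g}) :=
    isOpen_set_pi F.finite_toSet fun _ _ => isOpen_discrete _
  obtain ⟨_, hz, c, rfl⟩ := mem_closure_iff.mp hy _ hopen fun g _ => rfl
  exact ⟨c, hz⟩

variable {T} in
lemma IsIrreducible.exists_apply_eq_some (hG : IsAmenable G) (hT : T.IsIrreducible)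
    {y : G → Option (Finset G)} (hy : y ∈ T.subshift) {S : Finset G} (hS : S ∈ T.shapes) :
    ∃ g : G, y g = some S := by
  classical
  obtain ⟨Fo, hFo⟩ := hG
  obtain ⟨T₀, ε, hε, hirr⟩ := hT
  obtain ⟨n, hinv⟩ := hFo.exists_invariantSet T₀ hε
  obtain ⟨c, hc⟩ := T.exists_shift_eqOn_of_mem_subshift hy (Fo n)
  obtain ⟨c', hc', htile⟩ := hirr _ (hinv.image_mul_right c) S hS
  obtain ⟨g, hg, rfl⟩ := Finset.mem_image.mp (Finset.mem_coe.mp (htile (T.mem_tile hS c')))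
  exact ⟨g, hc g hg ▸ (T.point_eq_some_iff hS _).mpr hc'⟩

lemma exists_window_of_forall_mem_subshift
    (h : ∀ y ∈ T.subshift, ∀ S ∈ T.shapes, ∃ g : G, y g = some S) :
    ∃ W : Finset G, ∀ y ∈ T.subshift, ∀ S ∈ T.shapes, ∃ g ∈ W, y g = some S := by
  classical
  let U : Finset G → Set (G → Option (Finset G)) :=
    fun W => {y | ∀ S ∈ T.shapes, ∃ g ∈ W, y g = some S}
  have hU : ∀ W, IsOpen (U W) := fun W => by
    have : U W = ⋂ S ∈ T.shapes, ⋃ g ∈ W, (fun y => y g) ⁻¹' {some S} := by ext; simp [U]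
    rw [this]
    exact isOpen_biInter_finset fun S _ => isOpen_biUnion fun g _ =>
      (isOpen_discrete _).preimage (continuous_apply g)
  have hcover : T.subshift ⊆ ⋃ W, U W := fun y hy => by
    choose! g hg using h y hy
    exact Set.mem_iUnion.mpr
      ⟨T.shapes.image g, fun S hS => ⟨g S, Finset.mem_image_of_mem g hS, hg S hS⟩⟩
  have hmono : Monotone U := fun W W' hW y hy S hS =>
    (hy S hS).imp fun g ⟨hg, hyg⟩ => ⟨hW hg, hyg⟩
  exact T.isCompact_subshift.elim_directed_cover U hU hcover hmono.directed_le

lemma isIrreducible_of_forall_exists_mul_mem_center (W : Finset G)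
    (hW : ∀ c : G, ∀ S ∈ T.shapes, ∃ g ∈ W, g * c ∈ T.center S) : T.IsIrreducible := by
  classical
  refine ⟨insert 1 (T.shapes.sup id * W), 1, one_pos, fun F hF S hS => ?_⟩
  obtain ⟨c, hc⟩ := hF.exists_mul_mem (Finset.mem_insert_self 1 _)
  obtain ⟨g, hg, hgc⟩ := hW c S hS
  refine ⟨g * c, hgc, ?_⟩
  rintro _ ⟨s, hs, _, rfl, rfl⟩
  show s * (g * c) ∈ (F : Set G)
  rw [← mul_assoc]
  exact hc _ (Finset.mem_insert_of_mem
    (Finset.mul_mem_mul (Finset.le_sup (f := id) hS hs) hg))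

end FiniteTiling

theorem irreducible_iff_every_shape_occurs_general
    {G : Type*} [Group G] (hG : IsAmenable G)
    (T : FiniteTiling G) :
    T.IsIrreducible ↔
      ∀ y ∈ T.subshift, ∀ S ∈ T.shapes, ∃ g : G, y g = some S := by
  refine ⟨fun hT y hy S hS => hT.exists_apply_eq_some hG hy hS, fun h => ?_⟩
  obtain ⟨W, hW⟩ := T.exists_window_of_forall_mem_subshift h
  refine T.isIrreducible_of_forall_exists_mul_mem_center W fun c S hS => ?_
  obtain ⟨g, hg, hgS⟩ := hW _ (T.shiftAct_point_mem_subshift c) S hS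
  exact ⟨g, hg, (T.point_eq_some_iff hS _).mp hgS⟩

/-- A finite tiling is irreducible iff every point of the
associated subshift contains every shape symbol. -/
theorem irreducible_iff_every_shape_occurs
    {G : Type*} [Group G] [Countable G] [Infinite G] (hG : IsAmenable G)
    (T : FiniteTiling G) :
    T.IsIrreducible ↔
      ∀ y ∈ T.subshift, ∀ S ∈ T.shapes, ∃ g : G, y g = some S :=
  irreducible_iff_every_shape_occurs_general hG T
end

section
/- Let G be an infinite amenable group, let S be a finite subset of G containing e_G whose set of centers C = {c : Sc is a tile} satisfies RC = G for some finite R ∋ e_G. Then for any 0 < ε < 1, every (RSS⁻¹R⁻¹, ε)-invariant finite subset F of G contains some translate Sc with c ∈ C and Sc ⊆ F. -/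
open Filter Topology Pointwise ENNReal

variable {G : Type*} [Group G]

/-- If `RC = G` with `1 ∈ R`, `1 ∈ S`, then every
`(RSS⁻¹R⁻¹, ε)`-invariant finite set contains a translate `Sc` with `c ∈ C`. -/
theorem invariant_set_contains_tile
    {G : Type*} [Group G] [Infinite G] [DecidableEq G] (hG : IsAmenable G)
    (S : Finset G) (hS : (1 : G) ∈ S) (C : Set G)
    (R : Finset G) (hR : (1 : G) ∈ R) (hRC : (R : Set G) * C = Set.univ)
    (ε : ℝ) (hε0 : 0 < ε) (hε1 : ε < 1)
    (F : Finset G) (hF : InvariantSet F (R * S * S⁻¹ * R⁻¹) ε) :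
    ∃ c ∈ C, (S : Set G) * {c} ⊆ (F : Set G) := by
  set K := R * S * S⁻¹ * R⁻¹ with hK
  have h1K : (1 : G) ∈ K := by
    have h := Finset.mul_mem_mul (Finset.mul_mem_mul (Finset.mul_mem_mul hR hS)
      (Finset.inv_mem_inv hS)) (Finset.inv_mem_inv hR)
    simpa using h
  have hex : ∃ g, ∀ k ∈ K, k * g ∈ F := by
    by_contra h
    push_neg at h
    have hsub : (F : Set G) ⊆ kBoundary F K := by
      intro f hf
      exact ⟨⟨1, h1K, by simpa using hf⟩, h f⟩
    have hfin : (kBoundary F K).Finite := by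
      refine Set.Finite.subset (Finset.finite_toSet (K⁻¹ * F)) ?_
      rintro g ⟨⟨k, hk, hkg⟩, -⟩
      exact Finset.mem_coe.mpr (Finset.mem_mul.mpr
        ⟨k⁻¹, Finset.inv_mem_inv hk, k * g, hkg, by group⟩)
    have hle : (F.card : ℝ) ≤ ((kBoundary F K).ncard : ℝ) := by
      have := Set.ncard_le_ncard hsub hfin
      rw [Set.ncard_coe_finset] at this
      exact_mod_cast this
    have := hF
    unfold InvariantSet at this
    have hcard : (0 : ℝ) ≤ (F.card : ℝ) := Nat.cast_nonneg _
    nlinarith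
  obtain ⟨g, hg⟩ := hex
  have hgU : g ∈ (R : Set G) * C := by
    have := Set.mem_univ g
    rw [← hRC] at this
    exact this
  obtain ⟨r, hr, c, hc, hrc⟩ := hgU
  refine ⟨c, hc, ?_⟩
  rintro x ⟨s, hs, y, hy, rfl⟩
  rcases Set.mem_singleton_iff.mp hy with rfl
  have hk : (1 : G) * s * (1 : G)⁻¹ * r⁻¹ ∈ K :=
    Finset.mul_mem_mul (Finset.mul_mem_mul (Finset.mul_mem_mul hR hs)
      (Finset.inv_mem_inv hS)) (Finset.inv_mem_inv hr)
  have := hg _ hk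
  have hx : (1 : G) * s * (1 : G)⁻¹ * r⁻¹ * g = s * y := by
    rw [← hrc]; group
  rw [hx] at this
  exact this
end

section
/- Let G be an amenable group, T a finite tiling of G, F a finite subset of G, and ε > 0. If F is sufficiently invariant (with respect to the union of translated shapes of T and ε), then for every g ∈ G, the union of all tiles of the translated tiling Tg that are entirely contained in F covers at least a (1 − ε)-proportion of F: |⋃{T' ∈ Tg : T' ⊆ F}| ≥ (1 − ε)|F|. -/
open Filter Topology Pointwise ENNReal

variable {G : Type*} [Group G]

/-- For a sufficiently invariant finite set `F`, the tiles of any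
translated tiling `Tg` entirely contained in `F` cover at least a `(1 - ε)`
proportion of `F`. -/
theorem tiles_cover_invariant_set
    {G : Type*} [Group G] (hG : IsAmenable G) (T : FiniteTiling G)
    (K : Finset G) (hK : ∀ S ∈ T.shapes, (S : Set G) * (S : Set G)⁻¹ ⊆ (K : Set G))
    (ε : ℝ) (hε : 0 < ε) (F : Finset G) (hF : InvariantSet F K ε) :
    ∀ g : G,
      (1 - ε) * (F.card : ℝ) ≤
        (((⋃ t ∈ {t : Set G | t ∈ T.tiles ∧ t * {g} ⊆ (F : Set G)}, t * {g}).ncard : ℝ)) := by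
  intro g
  set U : Set G := ⋃ t ∈ {t : Set G | t ∈ T.tiles ∧ t * {g} ⊆ (F : Set G)}, t * {g} with hU
  have hUF : U ⊆ (F : Set G) := by
    intro x hx
    simp only [hU, Set.mem_iUnion] at hx
    obtain ⟨t, ⟨ht, hsub⟩, hx⟩ := hx
    exact hsub hx
  -- every uncovered point of F is in the K-boundary
  have hbd : (F : Set G) \ U ⊆ kBoundary F K := by
    rintro f ⟨hfF, hfU⟩
    obtain ⟨t, ⟨ht, hmem⟩, -⟩ := T.covers (f * g⁻¹)
    obtain ⟨S, hS, c, rfl⟩ := T.tile_shape t ht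
    obtain ⟨s, hs, c', hc', hfc⟩ := hmem
    rw [Set.mem_singleton_iff] at hc'
    rw [hc'] at hfc
    have hf : f = s * c * g := by
      rw [show s * c = f * g⁻¹ from hfc]; group
    have hnot : ¬ ((S : Set G) * {c}) * {g} ⊆ (F : Set G) := by
      intro h
      apply hfU
      apply Set.mem_biUnion
        (show _ ∈ {t : Set G | t ∈ T.tiles ∧ t * {g} ⊆ (F : Set G)} from ⟨ht, h⟩)
      rw [hf]
      exact Set.mul_mem_mul (Set.mul_mem_mul hs rfl) rfl
    rw [Set.not_subset] at hnot
    obtain ⟨y, hy, hyF⟩ := hnot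
    obtain ⟨z, hz, g', hg', rfl⟩ := hy
    obtain ⟨s', hs', c'', hc'', rfl⟩ := hz
    rw [Set.mem_singleton_iff] at hg' hc''
    rw [hg', hc''] at hyF
    constructor
    · refine ⟨1, ?_, by simpa using hfF⟩
      have h1 : (1 : G) ∈ (K : Set G) := by
        have := hK S hS (Set.mul_mem_mul (T.one_mem_shape S hS)
          (Set.inv_mem_inv.2 (T.one_mem_shape S hS)))
        simpa using this
      exact_mod_cast h1
    · refine ⟨s' * s⁻¹, ?_, ?_⟩
      · have : s' * s⁻¹ ∈ (K : Set G) :=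
          hK S hS (Set.mul_mem_mul hs' (Set.inv_mem_inv.2 hs))
        exact_mod_cast this
      · have : s' * s⁻¹ * f = s' * c * g := by rw [hf]; group
        rw [this]
        exact hyF
  -- finiteness of the boundary
  have hbfin : (kBoundary F K).Finite := by
    apply Set.Finite.subset (Set.Finite.mul (K.finite_toSet.inv) F.finite_toSet)
    rintro x ⟨⟨k, hk, hkx⟩, -⟩
    exact ⟨k⁻¹, Set.inv_mem_inv.2 hk, k * x, hkx, by group⟩
  have hUfin : U.Finite := F.finite_toSet.subset hUF
  -- cardinality computation
  have hdiff : ((F : Set G) \ U).ncard + U.ncard = (F : Set G).ncard :=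
    Set.ncard_diff_add_ncard_of_subset hUF F.finite_toSet
  have hle : ((F : Set G) \ U).ncard ≤ (kBoundary F K).ncard :=
    Set.ncard_le_ncard hbd hbfin
  have hFn : (F : Set G).ncard = F.card := Set.ncard_coe_finset F
  have hlt : ((kBoundary F K).ncard : ℝ) < ε * F.card := hF
  have : ((F : Set G).ncard : ℝ) - (U.ncard : ℝ) < ε * F.card := by
    have : ((F : Set G).ncard : ℝ) - (U.ncard : ℝ) = (((F : Set G) \ U).ncard : ℝ) := by
      rw [← hdiff]; push_cast; ring
    rw [this]
    calc ((((F : Set G) \ U).ncard : ℝ)) ≤ ((kBoundary F K).ncard : ℝ) := by exact_mod_cast hle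
      _ < ε * F.card := hlt
  rw [hFn] at this
  linarith
end
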